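/- arXiv:1909.04231 — 6 statements merged into one kernel-verified Lean document; each statement's English description precedes it below -/
import Mathlib

section
/- For every real p with φ < p ≤ 1, the probability that Player 1 wins the random game of depth n tends to 1: lim_{n→∞} μ_{n,p}({a : V_n(a) = true}) = 1. -/
/-!
Let `qₙ` be the probability that Player 1 wins the depth-`n` game. The two subtrees of the root
are independent games of depth `n`, so `qₙ₊₁ = qₙ²` after a round of the minimizer (`AND`) and
`qₙ₊₁ = 1 - (1 - qₙ)²` after a round of the maximizer (`OR`). Over one pair of rounds the gap
`1 - q` becomes `(1 - q²)² = (1 - q) · (1 - q)(1 + q)²`, and as long as `q ≥ p` the factor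
`(1 - q)(1 + q)²` is at most `(1 - p)(1 + p)²`, which is `< 1` exactly when `p² + p > 1`,
i.e. `p > φ`. Hence the gap decays geometrically.
-/

open Filter Topology

/-- The golden ratio `φ = (√5 − 1)/2`. -/
noncomputable def phi : ℝ := (Real.sqrt 5 - 1) / 2

/-- Backward-induction value of the win-lose game of depth `n` on the complete binary tree:
`V_0(a) = a 0`; for `n ≥ 1`, the value is the `AND` of the values of the two depth-`(n−1)`
subtrees if `n` is odd (Player 2, the minimizer, moves) and the `OR` if `n` is even
(Player 1, the maximizer, moves).  Player 2 moves last. -/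
def gameValue : (n : ℕ) → (Fin (2 ^ n) → Bool) → Bool
  | 0, a => a 0
  | n + 1, a =>
      have h : 2 ^ (n + 1) = 2 ^ n + 2 ^ n := by rw [pow_succ]; omega
      let aL : Fin (2 ^ n) → Bool := fun i => a ⟨i.1, by have := i.2; omega⟩
      let aR : Fin (2 ^ n) → Bool := fun i => a ⟨i.1 + 2 ^ n, by have := i.2; omega⟩
      if (n + 1) % 2 = 1 then gameValue n aL && gameValue n aR
      else gameValue n aL || gameValue n aR

/-- `μ_{n,p}(S)`: the probability of a set `S` of depth-`n` games when the `2^n` payoffs are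
i.i.d. Bernoulli, each `true` with probability `p`. -/
noncomputable def prob (n : ℕ) (p : ℝ) (S : Set (Fin (2 ^ n) → Bool)) : ℝ :=
  ∑ a : Fin (2 ^ n) → Bool, S.indicator (fun a => ∏ i, if a i then p else 1 - p) a

section Bernoulli

variable {ι κ ν : Type*} [Fintype ι] [Fintype κ] [Fintype ν]

noncomputable def bernoulliWeight (p : ℝ) (a : ι → Bool) : ℝ :=
  ∏ i, if a i then p else 1 - p

theorem bernoulliWeight_eq_mul (p : ℝ) (e : ι ⊕ κ ≃ ν) (a : ν → Bool) :
    bernoulliWeight p a =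
      bernoulliWeight p (fun i => a (e (.inl i))) *
        bernoulliWeight p (fun j => a (e (.inr j))) := by
  rw [bernoulliWeight,
    ← Fintype.prod_equiv e (fun s => if a (e s) then p else 1 - p) _ fun _ => rfl,
    Fintype.prod_sum_type]
  rfl

variable [DecidableEq ι] [DecidableEq κ] [DecidableEq ν]

noncomputable def bernoulliProb (p : ℝ) (f : (ι → Bool) → Bool) : ℝ :=
  ∑ a, if f a then bernoulliWeight p a else 0

theorem sum_bernoulliWeight (p : ℝ) : ∑ a : ι → Bool, bernoulliWeight p a = 1 := by
  unfold bernoulliWeight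
  rw [← Fintype.prod_sum fun (_ : ι) (b : Bool) => if b then p else 1 - p]
  simp

theorem bernoulliProb_not (p : ℝ) (f : (ι → Bool) → Bool) :
    bernoulliProb p (fun a => !f a) = 1 - bernoulliProb p f := by
  rw [← sum_bernoulliWeight (ι := ι) p, bernoulliProb, bernoulliProb, ← Finset.sum_sub_distrib]
  refine Finset.sum_congr rfl fun a _ => ?_
  cases f a <;> simp

theorem bernoulliProb_eval_of_unique [Unique ι] (p : ℝ) (i : ι) :
    bernoulliProb p (fun a => a i) = p := by
  rw [Unique.eq_default i, bernoulliProb, ← (Equiv.funUnique ι Bool).symm.sum_comp]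
  simp [bernoulliWeight]

theorem bernoulliProb_and (p : ℝ) (e : ι ⊕ κ ≃ ν) (f : (ι → Bool) → Bool)
    (g : (κ → Bool) → Bool) :
    bernoulliProb p (fun a => f (fun i => a (e (.inl i))) && g (fun j => a (e (.inr j)))) =
      bernoulliProb p f * bernoulliProb p g := by
  let split : (ν → Bool) ≃ (ι → Bool) × (κ → Bool) :=
    (e.symm.arrowCongr (Equiv.refl Bool)).trans (Equiv.sumArrowEquivProdArrow ι κ Bool)
  rw [bernoulliProb, bernoulliProb, bernoulliProb, Finset.sum_mul_sum, ← Fintype.sum_prod_type']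
  refine Fintype.sum_equiv split _ _ fun a => ?_
  -- `split a` is definitionally the pair of restrictions of `a` along `e`
  change _ =
    (if f (fun i => a (e (.inl i))) then bernoulliWeight p (fun i => a (e (.inl i))) else 0) *
      (if g (fun j => a (e (.inr j))) then bernoulliWeight p (fun j => a (e (.inr j))) else 0)
  rw [bernoulliWeight_eq_mul p e a]
  cases f (fun i => a (e (.inl i))) <;> cases g (fun j => a (e (.inr j))) <;> simp

theorem bernoulliProb_or (p : ℝ) (e : ι ⊕ κ ≃ ν) (f : (ι → Bool) → Bool)
    (g : (κ → Bool) → Bool) :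
    bernoulliProb p (fun a => f (fun i => a (e (.inl i))) || g (fun j => a (e (.inr j)))) =
      1 - (1 - bernoulliProb p f) * (1 - bernoulliProb p g) := by
  have h := bernoulliProb_and p e (fun b => !f b) (fun c => !g c)
  rw [bernoulliProb_not, bernoulliProb_not] at h
  rw [← h, ← bernoulliProb_not]
  simp only [Bool.not_and, Bool.not_not]

end Bernoulli

def splitIndex (n : ℕ) : Fin (2 ^ n) ⊕ Fin (2 ^ n) ≃ Fin (2 ^ (n + 1)) :=
  finSumFinEquiv.trans (finCongr (by rw [pow_succ, mul_two]))

theorem gameValue_succ (n : ℕ) :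
    gameValue (n + 1) = fun a =>
      if (n + 1) % 2 = 1 then
        gameValue n (fun i => a (splitIndex n (.inl i))) &&
          gameValue n (fun j => a (splitIndex n (.inr j)))
      else
        gameValue n (fun i => a (splitIndex n (.inl i))) ||
          gameValue n (fun j => a (splitIndex n (.inr j))) := by
  funext a
  have hR : (fun j => a (splitIndex n (.inr j))) =
      fun j => a ⟨j.1 + 2 ^ n, by have := j.2; have := pow_succ 2 n; omega⟩ :=
    funext fun j => congrArg a (Fin.ext (by simp [splitIndex]))
  rw [hR]
  rfl

theorem bernoulliProb_gameValue_zero (p : ℝ) : bernoulliProb p (gameValue 0) = p :=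
  bernoulliProb_eval_of_unique (ι := Fin 1) p 0

theorem bernoulliProb_gameValue_succ (p : ℝ) (n : ℕ) :
    bernoulliProb p (gameValue (n + 1)) =
      if (n + 1) % 2 = 1 then bernoulliProb p (gameValue n) ^ 2
      else 1 - (1 - bernoulliProb p (gameValue n)) ^ 2 := by
  by_cases hn : (n + 1) % 2 = 1 <;>
    simp only [gameValue_succ, hn, ↓reduceIte, bernoulliProb_and, bernoulliProb_or, sq]

theorem prob_eq_bernoulliProb (n : ℕ) (p : ℝ) (f : (Fin (2 ^ n) → Bool) → Bool) :
    prob n p {a | f a = true} = bernoulliProb p f := by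
  simp only [prob, bernoulliProb, bernoulliWeight, Set.indicator_apply, Set.mem_ofPred_eq]

theorem phi_sq_add_phi : phi ^ 2 + phi = 1 := by
  have h5 : Real.sqrt 5 ^ 2 = 5 := Real.sq_sqrt (by norm_num)
  unfold phi
  linear_combination h5 / 4

theorem one_half_lt_phi : 1 / 2 < phi := by
  have h5 : (2 : ℝ) < Real.sqrt 5 := (Real.lt_sqrt (by norm_num)).2 (by norm_num)
  unfold phi
  linarith

noncomputable def gapContraction (p : ℝ) : ℝ := (1 - p) * (1 + p) ^ 2

theorem one_sub_gapContraction (p : ℝ) :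
    1 - gapContraction p = p * (p - phi) * (p + phi + 1) := by
  unfold gapContraction
  linear_combination p * phi_sq_add_phi

theorem gapContraction_nonneg {p : ℝ} (hp : p ≤ 1) : 0 ≤ gapContraction p := by
  unfold gapContraction
  have : 0 ≤ 1 - p := by linarith
  positivity

theorem gapContraction_le_one {p : ℝ} (hp : phi ≤ p) : gapContraction p ≤ 1 := by
  have hphi := one_half_lt_phi
  have : 0 ≤ 1 - gapContraction p := by
    rw [one_sub_gapContraction]
    apply mul_nonneg (mul_nonneg _ _) <;> linarith
  linarith

theorem gapContraction_lt_one {p : ℝ} (hp : phi < p) : gapContraction p < 1 := by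
  have hphi := one_half_lt_phi
  have : 0 < 1 - gapContraction p := by
    rw [one_sub_gapContraction]
    apply mul_pos (mul_pos _ _) <;> linarith
  linarith

theorem sq_one_sub_sq_le_gapContraction_mul {p q : ℝ} (hp : 1 / 3 ≤ p) (hpq : p ≤ q) (hq : q ≤ 1) :
    (1 - q ^ 2) ^ 2 ≤ gapContraction p * (1 - q) := by
  -- `x ↦ (1 - x)(1 + x)²` is antitone on `[1/3, 1]`
  have hanti : (1 - q) * (1 + q) ^ 2 ≤ gapContraction p := by
    have hfactor : 0 ≤ p + q + p ^ 2 + p * q + q ^ 2 - 1 := by nlinarith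
    have hdiff : gapContraction p - (1 - q) * (1 + q) ^ 2 =
        (q - p) * (p + q + p ^ 2 + p * q + q ^ 2 - 1) := by
      unfold gapContraction; ring
    nlinarith [mul_nonneg (sub_nonneg.2 hpq) hfactor]
  calc (1 - q ^ 2) ^ 2 = ((1 - q) * (1 + q) ^ 2) * (1 - q) := by ring
    _ ≤ gapContraction p * (1 - q) := mul_le_mul_of_nonneg_right hanti (by linarith)

theorem le_and_one_sub_le_of_two_rounds {p : ℝ} (hp : phi ≤ p) (hp1 : p ≤ 1) {r : ℕ → ℝ}
    (h0 : r 0 = p) (hr : ∀ k, r (k + 1) = 1 - (1 - r k ^ 2) ^ 2) (k : ℕ) :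
    p ≤ r k ∧ r k ≤ 1 ∧ 1 - r k ≤ (1 - p) * gapContraction p ^ k := by
  have hc0 := gapContraction_nonneg hp1
  have hsmall : ∀ j, (1 - p) * gapContraction p ^ j ≤ 1 - p := fun j =>
    mul_le_of_le_one_right (by linarith) (pow_le_one₀ hc0 (gapContraction_le_one hp))
  induction k with
  | zero => simp [h0, hp1]
  | succ k ih =>
    obtain ⟨hpr, hr1, hgap⟩ := ih
    have hgap' : 1 - r (k + 1) ≤ (1 - p) * gapContraction p ^ (k + 1) :=
      calc 1 - r (k + 1) = (1 - r k ^ 2) ^ 2 := by rw [hr]; ring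
        _ ≤ gapContraction p * (1 - r k) :=
          sq_one_sub_sq_le_gapContraction_mul (by linarith [one_half_lt_phi]) hpr hr1
        _ ≤ gapContraction p * ((1 - p) * gapContraction p ^ k) :=
          mul_le_mul_of_nonneg_left hgap hc0
        _ = (1 - p) * gapContraction p ^ (k + 1) := by ring
    exact ⟨by linarith [hsmall (k + 1)], by rw [hr]; nlinarith, hgap'⟩

theorem tendsto_one_of_alternating_rounds {p : ℝ} (hp : phi < p) (hp1 : p ≤ 1) {q : ℕ → ℝ}
    (h0 : q 0 = p) (hodd : ∀ k, q (2 * k + 1) = q (2 * k) ^ 2)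
    (heven : ∀ k, q (2 * k + 2) = 1 - (1 - q (2 * k + 1)) ^ 2) :
    Tendsto q atTop (𝓝 1) := by
  have hc0 := gapContraction_nonneg hp1
  have hbound := le_and_one_sub_le_of_two_rounds hp.le hp1 (r := fun k => q (2 * k)) h0
    (fun k => by rw [show 2 * (k + 1) = 2 * k + 2 by ring, heven, hodd])
  have hgap : ∀ n, 0 ≤ 1 - q n ∧ 1 - q n ≤ 2 * (1 - p) * gapContraction p ^ (n / 2) := by
    intro n
    obtain ⟨k, rfl | rfl⟩ := Nat.even_or_odd' n
    · obtain ⟨-, hle, hgap⟩ := hbound k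
      rw [Nat.mul_div_cancel_left k two_pos]
      exact ⟨by linarith, by nlinarith [pow_nonneg hc0 k]⟩
    · obtain ⟨hpq, hle, hgap⟩ := hbound k
      have hq0 : 0 ≤ q (2 * k) := by linarith [one_half_lt_phi]
      rw [show (2 * k + 1) / 2 = k by omega, hodd]
      exact ⟨by nlinarith, by nlinarith⟩
  have hlim : Tendsto (fun n => 2 * (1 - p) * gapContraction p ^ (n / 2)) atTop (𝓝 0) := by
    simpa using ((tendsto_pow_atTop_nhds_zero_of_lt_one hc0 (gapContraction_lt_one hp)).comp
      (Nat.tendsto_div_const_atTop two_ne_zero)).const_mul (2 * (1 - p))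
  simpa using (squeeze_zero (fun n => (hgap n).1) (fun n => (hgap n).2) hlim).const_sub 1

/-- For every `p` with `φ < p ≤ 1`, the probability that Player 1 wins the depth-`n`
random game tends to `1` as `n → ∞`. -/
theorem player_one_wins_asymptotically (p : ℝ) (hp : phi < p) (hp' : p ≤ 1) :
    Tendsto (fun n => prob n p {a | gameValue n a = true}) atTop (𝓝 1) := by
  simp only [prob_eq_bernoulliProb]
  refine tendsto_one_of_alternating_rounds hp hp' (bernoulliProb_gameValue_zero p)
    (fun k => ?_) (fun k => ?_)
  · rw [bernoulliProb_gameValue_succ, if_pos (by omega)]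
  · rw [bernoulliProb_gameValue_succ, if_neg (by omega)]
end

section
/- For every real x with φ² < x ≤ 1, the sequence of iterates g^[n](x) (g applied n times to x) is nondecreasing in n and converges to 1 as n → ∞. -/
/-!
On `(φ², 1]` the map `g` stays below `1` and factors as
`g y - y = y (1 - y) (y - φ²) (3 - φ² - y)`, because `φ²` and `3 - φ²` are the roots of
`y² - 3y + 1`. So the orbit of `x` is nondecreasing and bounded by `1`; its limit is a fixed point
of `g` in `(φ², 1]`, and the factorization shows that the only such fixed point is `1`.
-/

open Filter Topology

/-- The two-level recursion map `g(x) = (1 − (1 − x)²)² = x⁴ − 4x³ + 4x²`. -/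
def g (x : ℝ) : ℝ := (1 - (1 - x) ^ 2) ^ 2

open Set Function

lemma monotone_iterate_apply_of_mapsTo {α : Type*} [Preorder α] {f : α → α} {s : Set α}
    (hs : MapsTo f s s) (hle : ∀ y ∈ s, y ≤ f y) {x : α} (hx : x ∈ s) :
    Monotone fun n => f^[n] x :=
  monotone_nat_of_le_succ fun n => by
    simpa only [iterate_succ_apply'] using hle _ (hs.iterate n hx)

lemma phi_sq_mul_three_sub_phi_sq : phi ^ 2 * (3 - phi ^ 2) = 1 := by
  have h5 : Real.sqrt 5 ^ 2 = 5 := Real.sq_sqrt (by norm_num)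
  unfold phi
  linear_combination (-Real.sqrt 5 ^ 2 + 4 * Real.sqrt 5 + 1) / 16 * h5

lemma g_sub_self (y : ℝ) : g y - y = y * (1 - y) * (y - phi ^ 2) * (3 - phi ^ 2 - y) := by
  unfold g
  linear_combination (y - y ^ 2) * phi_sq_mul_three_sub_phi_sq

lemma continuous_g : Continuous g := by
  unfold g
  fun_prop

lemma g_le_one {y : ℝ} (h0 : 0 ≤ y) (h2 : y ≤ 2) : g y ≤ 1 := by
  have hsq : (1 - y) ^ 2 ≤ 1 := by nlinarith
  unfold g
  exact pow_le_one₀ (by nlinarith) (by linarith [sq_nonneg (1 - y)])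

lemma self_le_g {y : ℝ} (hy : y ∈ Ioc (phi ^ 2) 1) : y ≤ g y := by
  obtain ⟨hlo, hhi⟩ := hy
  have h0 : 0 < y := (sq_nonneg phi).trans_lt hlo
  have : 0 ≤ y * (1 - y) * (y - phi ^ 2) * (3 - phi ^ 2 - y) := by
    apply mul_nonneg (mul_nonneg (mul_nonneg h0.le _) _) <;> linarith
  linarith [g_sub_self y]

lemma self_lt_g {y : ℝ} (hy : y ∈ Ioo (phi ^ 2) 1) : y < g y := by
  obtain ⟨hlo, hhi⟩ := hy
  have h0 : 0 < y := (sq_nonneg phi).trans_lt hlo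
  have : 0 < y * (1 - y) * (y - phi ^ 2) * (3 - phi ^ 2 - y) := by
    apply mul_pos (mul_pos (mul_pos h0 _) _) <;> linarith
  linarith [g_sub_self y]

lemma mapsTo_g_Ioc : MapsTo g (Ioc (phi ^ 2) 1) (Ioc (phi ^ 2) 1) := fun y hy =>
  ⟨hy.1.trans_le (self_le_g hy), g_le_one ((sq_nonneg phi).trans hy.1.le) (by linarith [hy.2])⟩

lemma eq_one_of_isFixedPt_g {y : ℝ} (hy : y ∈ Ioc (phi ^ 2) 1) (hfix : IsFixedPt g y) : y = 1 :=
  hy.2.eq_or_lt.resolve_right fun hlt => (self_lt_g ⟨hy.1, hlt⟩).ne' hfix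

/-- For `φ² < x ≤ 1` the iterates `g^[n](x)` are nondecreasing in `n` and converge to `1`. -/
theorem g_iterates_tendsto_one (x : ℝ) (h1 : phi ^ 2 < x) (h2 : x ≤ 1) :
    Monotone (fun n => g^[n] x) ∧ Tendsto (fun n => g^[n] x) atTop (𝓝 1) := by
  have hx : x ∈ Ioc (phi ^ 2) 1 := ⟨h1, h2⟩
  have horbit (n : ℕ) : g^[n] x ∈ Ioc (phi ^ 2) 1 := mapsTo_g_Ioc.iterate n hx
  have hmono := monotone_iterate_apply_of_mapsTo mapsTo_g_Ioc (fun _ => self_le_g) hx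
  have hlim : Tendsto (fun n => g^[n] x) atTop (𝓝 (⨆ n, g^[n] x)) :=
    tendsto_atTop_ciSup hmono ⟨1, forall_mem_range.2 fun n => (horbit n).2⟩
  have hfix := isFixedPt_of_tendsto_iterate hlim continuous_g.continuousAt
  have hmem : (⨆ n, g^[n] x) ∈ Ioc (phi ^ 2) 1 :=
    ⟨h1.trans_le (hmono.ge_of_tendsto hlim 0), le_of_tendsto' hlim fun n => (horbit n).2⟩
  exact ⟨hmono, eq_one_of_isFixedPt_g hmem hfix ▸ hlim⟩
end

section
/- For every real x with 0 ≤ x < φ², the sequence of iterates g^[n](x) (g applied n times to x) is nonincreasing in n and converges to 0 as n → ∞. -/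
open Filter Topology

/-!
Write `g y = y · h(y)` with `h(y) = y (2 − y)²`. Since
`1 − h(x) = (1 − x)(φ² − x)(φ⁻² − x)`, the rate `r = h(x)` is `< 1` exactly when `0 ≤ x < φ²`, and
as `h` is increasing on `[0, 2/3] ⊇ [0, φ²]` we get `0 ≤ g y ≤ r y` for all `y ∈ [0, x]`.
Any map with this property on `[0, x]` has nonincreasing iterates bounded by `rⁿ x`.
-/

section ContractionTowardsZero

open Set

variable {f : ℝ → ℝ} {a r x : ℝ}

theorem mapsTo_Icc_of_le_mul (hr : r ≤ 1) (hf : ∀ y ∈ Icc 0 a, 0 ≤ f y ∧ f y ≤ r * y) :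
    MapsTo f (Icc 0 a) (Icc 0 a) := fun y hy => by
  obtain ⟨hfy0, hfy⟩ := hf y hy
  exact ⟨hfy0, by nlinarith [hy.1, hy.2]⟩

theorem iterate_le_pow_mul_of_le_mul (hr0 : 0 ≤ r) (hr1 : r ≤ 1)
    (hf : ∀ y ∈ Icc 0 a, 0 ≤ f y ∧ f y ≤ r * y) (hx : x ∈ Icc 0 a) (n : ℕ) :
    f^[n] x ≤ r ^ n * x := by
  induction n with
  | zero => simp
  | succ n ih =>
    have hmem : f^[n] x ∈ Icc 0 a := ((mapsTo_Icc_of_le_mul hr1 hf).iterate n) hx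
    rw [Function.iterate_succ_apply', pow_succ']
    calc f (f^[n] x) ≤ r * f^[n] x := (hf _ hmem).2
      _ ≤ r * (r ^ n * x) := by gcongr
      _ = r * r ^ n * x := (mul_assoc _ _ _).symm

theorem antitone_iterate_of_le_mul (hr : r ≤ 1) (hf : ∀ y ∈ Icc 0 a, 0 ≤ f y ∧ f y ≤ r * y)
    (hx : x ∈ Icc 0 a) : Antitone fun n => f^[n] x := by
  refine antitone_nat_of_succ_le fun n => ?_
  have hmem : f^[n] x ∈ Icc 0 a := ((mapsTo_Icc_of_le_mul hr hf).iterate n) hx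
  rw [Function.iterate_succ_apply']
  nlinarith [hf _ hmem, hmem.1]

theorem tendsto_iterate_zero_of_le_mul (hr0 : 0 ≤ r) (hr1 : r < 1)
    (hf : ∀ y ∈ Icc 0 a, 0 ≤ f y ∧ f y ≤ r * y) (hx : x ∈ Icc 0 a) :
    Tendsto (fun n => f^[n] x) atTop (𝓝 0) := by
  have hmem (n : ℕ) : f^[n] x ∈ Icc 0 a := ((mapsTo_Icc_of_le_mul hr1.le hf).iterate n) hx
  refine squeeze_zero (fun n => (hmem n).1)
    (iterate_le_pow_mul_of_le_mul hr0 hr1.le hf hx) ?_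
  simpa using (tendsto_pow_atTop_nhds_zero_of_lt_one hr0 hr1).mul_const x

end ContractionTowardsZero

theorem phi_sq : phi ^ 2 = (3 - √5) / 2 := by
  unfold phi
  nlinarith [Real.sq_sqrt (show (0 : ℝ) ≤ 5 by norm_num)]

theorem g_eq_mul (y : ℝ) : g y = y * (y * (2 - y) ^ 2) := by
  unfold g; ring

theorem g_nonneg (y : ℝ) : 0 ≤ g y := by
  unfold g; positivity

theorem mul_two_sub_sq_lt_one {x : ℝ} (h0 : 0 ≤ x) (hx : x < phi ^ 2) : x * (2 - x) ^ 2 < 1 := by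
  have hs5 : √5 ^ 2 = 5 := Real.sq_sqrt (by norm_num)
  have hs : 2 < √5 := by nlinarith [Real.sqrt_nonneg 5]
  rw [phi_sq] at hx
  have hfactor : 1 - x * (2 - x) ^ 2 = (1 - x) * ((3 - √5) / 2 - x) * ((3 + √5) / 2 - x) := by
    linear_combination (1 - x) / 4 * hs5
  have hpos : 0 < (1 - x) * ((3 - √5) / 2 - x) * ((3 + √5) / 2 - x) := by
    have : 0 < 1 - x := by linarith
    have : 0 < (3 - √5) / 2 - x := by linarith
    have : 0 < (3 + √5) / 2 - x := by linarith
    positivity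
  linarith

theorem mul_two_sub_sq_le_of_le {x y : ℝ} (hyx : y ≤ x) (hx : x ≤ 2 / 3) :
    y * (2 - y) ^ 2 ≤ x * (2 - x) ^ 2 := by
  nlinarith [mul_nonneg (sub_nonneg.2 hyx) (sub_nonneg.2 hx), sq_nonneg (x - y)]

theorem g_le_mul {x y : ℝ} (hy : 0 ≤ y) (hyx : y ≤ x) (hx : x ≤ 2 / 3) :
    g y ≤ x * (2 - x) ^ 2 * y := by
  rw [g_eq_mul, mul_comm _ y]
  exact mul_le_mul_of_nonneg_left (mul_two_sub_sq_le_of_le hyx hx) hy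

/-- For `0 ≤ x < φ²` the iterates `g^[n](x)` are nonincreasing in `n` and converge to `0`. -/
theorem g_iterates_tendsto_zero (x : ℝ) (h1 : 0 ≤ x) (h2 : x < phi ^ 2) :
    Antitone (fun n => g^[n] x) ∧ Tendsto (fun n => g^[n] x) atTop (𝓝 0) := by
  have hx : x ≤ 2 / 3 := by
    rw [phi_sq] at h2
    linarith [Real.le_sqrt_of_sq_le (show (2 : ℝ) ^ 2 ≤ 5 by norm_num)]
  have hg : ∀ y ∈ Set.Icc 0 x, 0 ≤ g y ∧ g y ≤ x * (2 - x) ^ 2 * y :=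
    fun y hy => ⟨g_nonneg y, g_le_mul hy.1 hy.2 hx⟩
  have hr : x * (2 - x) ^ 2 < 1 := mul_two_sub_sq_lt_one h1 h2
  have hxmem : x ∈ Set.Icc 0 x := ⟨h1, le_rfl⟩
  exact ⟨antitone_iterate_of_le_mul hr.le hg hxmem,
    tendsto_iterate_zero_of_le_mul (by positivity) hr hg hxmem⟩
end

section
/- The conditional non-1-fragility probabilities given that Player 2 wins satisfy β_0(1) = 0 and, for every n ≥ 0, β_{2n+1}(1) = φ³ + 2φ²·β_{2n}(1) and, for every n ≥ 1, β_{2n}(1) = (β_{2n−1}(1))². -/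
open Filter Topology

/-- A game `a` of depth `n` is `d`-fragile if there is a game `a'` at Hamming distance at most
`d` from `a` whose value differs from that of `a`. -/
def Fragile (n d : ℕ) (a : Fin (2 ^ n) → Bool) : Prop :=
  ∃ a' : Fin (2 ^ n) → Bool, hammingDist a a' ≤ d ∧ gameValue n a' ≠ gameValue n a

/-- `F_n(d,p)`: the probability that a depth-`n` random game with parameter `p` is `d`-fragile. -/
noncomputable def fragProb (n d : ℕ) (p : ℝ) : ℝ := prob n p {a | Fragile n d a}

/-- `α_n(d)`: conditional probability that a golden game of depth `n` is not `d`-fragile,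
given that Player 1 wins it. -/
noncomputable def alpha (n d : ℕ) : ℝ :=
  prob n phi {a | ¬ Fragile n d a ∧ gameValue n a = true} /
    prob n phi {a | gameValue n a = true}

/-- `β_n(d)`: conditional probability that a golden game of depth `n` is not `d`-fragile,
given that Player 2 wins it. -/
noncomputable def beta (n d : ℕ) : ℝ :=
  prob n phi {a | ¬ Fragile n d a ∧ gameValue n a = false} /
    prob n phi {a | gameValue n a = false}

namespace BetaAux

lemma two_pow_succ (n : ℕ) : 2 ^ (n+1) = 2^n + 2^n := by rw [pow_succ]; omega

def inL (n : ℕ) (i : Fin (2^n)) : Fin (2^(n+1)) :=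
  ⟨i.1, by have := i.2; have := two_pow_succ n; omega⟩
def inR (n : ℕ) (i : Fin (2^n)) : Fin (2^(n+1)) :=
  ⟨i.1 + 2^n, by have := i.2; have := two_pow_succ n; omega⟩

def dL (n : ℕ) (a : Fin (2^(n+1)) → Bool) : Fin (2^n) → Bool := fun i => a (inL n i)
def dR (n : ℕ) (a : Fin (2^(n+1)) → Bool) : Fin (2^n) → Bool := fun i => a (inR n i)

lemma gameValue_succ (n : ℕ) (a : Fin (2^(n+1)) → Bool) :
    gameValue (n+1) a = if (n+1) % 2 = 1 then gameValue n (dL n a) && gameValue n (dR n a)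
      else gameValue n (dL n a) || gameValue n (dR n a) := rfl

def glue (n : ℕ) (x y : Fin (2^n) → Bool) : Fin (2^(n+1)) → Bool :=
  fun i => if h : i.1 < 2^n then x ⟨i.1, h⟩
    else y ⟨i.1 - 2^n, by have := i.2; have := two_pow_succ n; omega⟩

lemma glue_inL (n : ℕ) (x y : Fin (2^n) → Bool) (i : Fin (2^n)) :
    glue n x y (inL n i) = x i := by
  simp [glue, inL, i.2]

lemma glue_inR (n : ℕ) (x y : Fin (2^n) → Bool) (i : Fin (2^n)) :
    glue n x y (inR n i) = y i := by
  have : ¬ ((inR n i).1 < 2^n) := by simp [inR]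
  rw [glue, dif_neg this]
  congr 1
  exact Fin.ext (by simp [inR])

lemma dL_glue (n : ℕ) (x y : Fin (2^n) → Bool) : dL n (glue n x y) = x :=
  funext fun i => glue_inL n x y i

lemma dR_glue (n : ℕ) (x y : Fin (2^n) → Bool) : dR n (glue n x y) = y :=
  funext fun i => glue_inR n x y i

lemma glue_eq (n : ℕ) (a : Fin (2^(n+1)) → Bool) : glue n (dL n a) (dR n a) = a := by
  funext i
  by_cases h : i.1 < 2^n
  · rw [glue, dif_pos h]
    exact congrArg a (Fin.ext rfl)
  · rw [glue, dif_neg h]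
    show a _ = a i
    congr 1
    have := i.2
    have := two_pow_succ n
    exact Fin.ext (by simp [inR]; omega)

lemma sum_split {M : Type*} [AddCommMonoid M] (n : ℕ) (F : Fin (2^(n+1)) → M) :
    ∑ i, F i = (∑ i : Fin (2^n), F (inL n i)) + ∑ i : Fin (2^n), F (inR n i) := by
  have h := two_pow_succ n
  rw [← Equiv.sum_comp (finCongr h.symm) F, Fin.sum_univ_add]
  congr 1
  exact Finset.sum_congr rfl fun i _ => congrArg F (Fin.ext (by simp [inR, add_comm]))

lemma prod_split {M : Type*} [CommMonoid M] (n : ℕ) (F : Fin (2^(n+1)) → M) :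
    ∏ i, F i = (∏ i : Fin (2^n), F (inL n i)) * ∏ i : Fin (2^n), F (inR n i) := by
  have h := two_pow_succ n
  rw [← Equiv.prod_comp (finCongr h.symm) F, Fin.prod_univ_add]
  congr 1
  exact Finset.prod_congr rfl fun i _ => congrArg F (Fin.ext (by simp [inR, add_comm]))

noncomputable def wt (n : ℕ) (p : ℝ) (a : Fin (2^n) → Bool) : ℝ :=
  ∏ i, if a i then p else 1 - p

lemma prob_eq (n : ℕ) (p : ℝ) (S : Set (Fin (2^n) → Bool)) :
    prob n p S = ∑ a, S.indicator (wt n p) a := rfl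

lemma wt_glue (n : ℕ) (p : ℝ) (x y : Fin (2^n) → Bool) :
    wt (n+1) p (glue n x y) = wt n p x * wt n p y := by
  rw [wt, prod_split]
  simp [glue_inL, glue_inR, wt]

def glueEquiv (n : ℕ) : ((Fin (2^n) → Bool) × (Fin (2^n) → Bool)) ≃ (Fin (2^(n+1)) → Bool) where
  toFun z := glue n z.1 z.2
  invFun a := (dL n a, dR n a)
  left_inv z := by simp [dL_glue, dR_glue]
  right_inv a := glue_eq n a

lemma prob_pair (n : ℕ) (p : ℝ) (P Q : Set (Fin (2^n) → Bool)) :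
    prob (n+1) p {a | dL n a ∈ P ∧ dR n a ∈ Q} = prob n p P * prob n p Q := by
  classical
  rw [prob_eq, prob_eq, prob_eq, ← Equiv.sum_comp (glueEquiv n), Fintype.sum_prod_type,
    Finset.sum_mul_sum]
  refine Finset.sum_congr rfl fun x _ => Finset.sum_congr rfl fun y _ => ?_
  by_cases hx : x ∈ P <;> by_cases hy : y ∈ Q <;>
    simp [glueEquiv, Set.indicator, dL_glue, dR_glue, hx, hy, wt_glue]


lemma prob_union (n : ℕ) (p : ℝ) {S T : Set (Fin (2^n) → Bool)} (h : Disjoint S T) :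
    prob n p (S ∪ T) = prob n p S + prob n p T := by
  simp only [prob_eq, Set.indicator_union_of_disjoint h, Finset.sum_add_distrib]

lemma sum_zero {M : Type*} [AddCommMonoid M] (f : (Fin (2^0) → Bool) → M) :
    ∑ a, f a = f (fun _ => true) + f (fun _ => false) := by
  haveI : Unique (Fin (2^0)) := inferInstanceAs (Unique (Fin 1))
  rw [← Equiv.sum_comp (Equiv.funUnique (Fin (2^0)) Bool).symm f]
  simp only [Fintype.sum_bool]
  exact congrArg₂ (· + ·) (congrArg f (funext fun i => rfl)) (congrArg f (funext fun i => rfl))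

lemma wt_zero (p : ℝ) (a : Fin (2^0) → Bool) : wt 0 p a = if a 0 then p else 1 - p := by
  haveI : Unique (Fin (2^0)) := inferInstanceAs (Unique (Fin 1))
  rw [wt]
  rw [Fintype.prod_unique (fun i => if a i then p else 1 - p)]
  haveI : Subsingleton (Fin (2^0)) := inferInstanceAs (Subsingleton (Fin 1))
  have h : ∀ i : Fin (2^0), a i = a 0 := fun i => congrArg a (Subsingleton.elim _ _)
  rw [h]

lemma prob_univ (n : ℕ) (p : ℝ) : prob n p Set.univ = 1 := by
  induction n with
  | zero =>
    rw [prob_eq, sum_zero]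
    simp [wt_zero]
  | succ n ih =>
    have : (Set.univ : Set (Fin (2^(n+1)) → Bool)) =
        {a | dL n a ∈ (Set.univ : Set (Fin (2^n) → Bool)) ∧ dR n a ∈ Set.univ} := by
      ext a; simp
    rw [this, prob_pair, ih, one_mul]

lemma prob_compl (n : ℕ) (p : ℝ) (S : Set (Fin (2^n) → Bool)) :
    prob n p Sᶜ = 1 - prob n p S := by
  have h : prob n p S + prob n p Sᶜ = 1 := by
    rw [← prob_univ n p, ← prob_union n p disjoint_compl_right, Set.union_compl_self]
  linarith

lemma ham_le_one {m : ℕ} (a a' : Fin m → Bool) (h : hammingDist a a' ≤ 1) :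
    a' = a ∨ ∃ j, a' = Function.update a j (!(a j)) := by
  classical
  rw [hammingDist] at h
  rcases Nat.le_one_iff_eq_zero_or_eq_one.1 h with h0 | h1
  · left
    rw [Finset.card_eq_zero] at h0
    funext i
    by_contra hne
    have : i ∈ Finset.univ.filter fun i => a i ≠ a' i := by
      simp [Ne.symm hne]
    simp [h0] at this
  · right
    rw [Finset.card_eq_one] at h1
    obtain ⟨j, hj⟩ := h1
    refine ⟨j, funext fun i => ?_⟩
    by_cases hij : i = j
    · subst hij
      have : i ∈ Finset.univ.filter fun i => a i ≠ a' i := by rw [hj]; simp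
      simp only [Finset.mem_filter] at this
      rw [Function.update_self]
      cases h1 : a i <;> cases h2 : a' i <;> simp_all
    · rw [Function.update_of_ne hij]
      by_contra hne
      have : i ∈ Finset.univ.filter fun i => a i ≠ a' i := by simp [Ne.symm hne]
      rw [hj] at this
      simp [hij] at this

lemma ham_update_le {m : ℕ} (a : Fin m → Bool) (j : Fin m) (b : Bool) :
    hammingDist a (Function.update a j b) ≤ 1 := by
  classical
  rw [hammingDist]
  have : (Finset.univ.filter fun i => a i ≠ Function.update a j b i) ⊆ {j} := by
    intro i hi
    simp only [Finset.mem_filter] at hi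
    by_contra hij
    simp only [Finset.mem_singleton] at hij
    exact hi.2 (by rw [Function.update_of_ne hij])
  calc _ ≤ ({j} : Finset (Fin m)).card := Finset.card_le_card this
  _ = 1 := Finset.card_singleton j

lemma fragile_iff_flip (n : ℕ) (a : Fin (2^n) → Bool) :
    Fragile n 1 a ↔ ∃ j, gameValue n (Function.update a j (!(a j))) ≠ gameValue n a := by
  constructor
  · rintro ⟨a', hd, hv⟩
    rcases ham_le_one a a' hd with rfl | ⟨j, rfl⟩
    · exact absurd rfl hv
    · exact ⟨j, hv⟩
  · rintro ⟨j, hv⟩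
    exact ⟨_, ham_update_le a j _, hv⟩

lemma hamming_glue (n : ℕ) (x y x' y' : Fin (2^n) → Bool) :
    hammingDist (glue n x y) (glue n x' y') = hammingDist x x' + hammingDist y y' := by
  classical
  simp only [hammingDist, Finset.card_filter]
  rw [sum_split]
  simp [glue_inL, glue_inR]

lemma fragile_succ_iff (n : ℕ) (a : Fin (2^(n+1)) → Bool) :
    Fragile (n+1) 1 a ↔
      (∃ x', hammingDist (dL n a) x' ≤ 1 ∧
        gameValue (n+1) (glue n x' (dR n a)) ≠ gameValue (n+1) a) ∨
      (∃ y', hammingDist (dR n a) y' ≤ 1 ∧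
        gameValue (n+1) (glue n (dL n a) y') ≠ gameValue (n+1) a) := by
  constructor
  · rintro ⟨a', hd, hv⟩
    have ha : a = glue n (dL n a) (dR n a) := (glue_eq n a).symm
    have ha' : a' = glue n (dL n a') (dR n a') := (glue_eq n a').symm
    rw [ha, ha', hamming_glue] at hd
    by_cases h0 : hammingDist (dR n a) (dR n a') = 0
    · left
      refine ⟨dL n a', by omega, ?_⟩
      have : dR n a' = dR n a := (hammingDist_eq_zero.1 h0).symm
      rw [← this, glue_eq]
      exact hv
    · right
      have h0' : hammingDist (dL n a) (dL n a') = 0 := by omega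
      refine ⟨dR n a', by omega, ?_⟩
      have : dL n a' = dL n a := (hammingDist_eq_zero.1 h0').symm
      rw [← this, glue_eq]
      exact hv
  · rintro (⟨x', hd, hv⟩ | ⟨y', hd, hv⟩)
    · refine ⟨glue n x' (dR n a), ?_, hv⟩
      calc hammingDist a (glue n x' (dR n a))
          = hammingDist (glue n (dL n a) (dR n a)) (glue n x' (dR n a)) := by rw [glue_eq]
        _ = hammingDist (dL n a) x' + hammingDist (dR n a) (dR n a) := hamming_glue ..
        _ ≤ 1 := by rw [hammingDist_self]; omega
    · refine ⟨glue n (dL n a) y', ?_, hv⟩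
      calc hammingDist a (glue n (dL n a) y')
          = hammingDist (glue n (dL n a) (dR n a)) (glue n (dL n a) y') := by rw [glue_eq]
        _ = hammingDist (dL n a) (dL n a) + hammingDist (dR n a) y' := hamming_glue ..
        _ ≤ 1 := by rw [hammingDist_self]; omega


lemma phi_sq : phi ^ 2 = 1 - phi := by
  have h5 : Real.sqrt 5 ^ 2 = 5 := Real.sq_sqrt (by norm_num)
  rw [phi]
  nlinarith [h5]

lemma phi_pos : 0 < phi := by
  have h5 : Real.sqrt 5 ^ 2 = 5 := Real.sq_sqrt (by norm_num)
  have : (1:ℝ) < Real.sqrt 5 := by nlinarith [Real.sqrt_nonneg 5]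
  rw [phi]; linarith

lemma phi_ne : phi ≠ 0 := ne_of_gt phi_pos

def TS (n : ℕ) : Set (Fin (2^n) → Bool) := {x | gameValue n x = true}
def FS (n : ℕ) : Set (Fin (2^n) → Bool) := {x | gameValue n x = false}
def NF (n : ℕ) : Set (Fin (2^n) → Bool) := {x | ¬ Fragile n 1 x ∧ gameValue n x = false}

lemma FS_compl (n : ℕ) : FS n = (TS n)ᶜ := by
  ext a; simp [FS, TS]

lemma TS_succ_odd (n : ℕ) (h : (n+1) % 2 = 1) :
    TS (n+1) = {a | dL n a ∈ TS n ∧ dR n a ∈ TS n} := by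
  ext a
  simp [TS, gameValue_succ, h, Bool.and_eq_true]

lemma FS_succ_even (n : ℕ) (h : (n+1) % 2 = 0) :
    FS (n+1) = {a | dL n a ∈ FS n ∧ dR n a ∈ FS n} := by
  ext a
  have h' : ¬ ((n+1) % 2 = 1) := by omega
  simp [FS, gameValue_succ, h', Bool.or_eq_false_iff]

lemma probTF : ∀ n : ℕ,
    (prob n phi (TS n) = if n % 2 = 0 then phi else phi^2) ∧
      (prob n phi (FS n) = if n % 2 = 0 then phi^2 else phi) := by
  intro n
  induction n with
  | zero =>
    constructor
    · rw [prob_eq, sum_zero]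
      have h1 : (fun _ => true) ∈ TS 0 := by simp [TS]; rfl
      have h2 : (fun _ => false) ∉ TS 0 := by simp [TS]; rfl
      rw [Set.indicator_of_mem h1, Set.indicator_of_notMem h2, wt_zero]
      simp
    · rw [prob_eq, sum_zero]
      have h1 : (fun _ => true) ∉ FS 0 := by simp [FS]; rfl
      have h2 : (fun _ => false) ∈ FS 0 := by simp [FS]; rfl
      rw [Set.indicator_of_notMem h1, Set.indicator_of_mem h2, wt_zero]
      simp [phi_sq]
  | succ n ih =>
    rcases Nat.even_or_odd n with he | ho
    · have hn : n % 2 = 0 := Nat.even_iff.1 he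
      have hn1 : (n+1) % 2 = 1 := by omega
      have hT : prob (n+1) phi (TS (n+1)) = phi^2 := by
        rw [TS_succ_odd n hn1, prob_pair, ih.1, if_pos hn]; ring
      constructor
      · rw [if_neg (by omega)]; exact hT
      · rw [if_neg (by omega), FS_compl, prob_compl, hT]
        have := phi_sq; linarith
    · have hn : n % 2 = 1 := Nat.odd_iff.1 ho
      have hn1 : (n+1) % 2 = 0 := by omega
      have hF : prob (n+1) phi (FS (n+1)) = phi^2 := by
        rw [FS_succ_even n hn1, prob_pair, ih.2, if_neg (by omega)]; ring
      constructor
      · rw [if_pos hn1, ← compl_compl (TS (n+1)), ← FS_compl, prob_compl, hF]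
        have := phi_sq; linarith
      · rw [if_pos hn1]; exact hF


lemma NF_succ_odd (n : ℕ) (h1 : (n+1) % 2 = 1) :
    NF (n+1) = {a | dL n a ∈ FS n ∧ dR n a ∈ FS n} ∪
      ({a | dL n a ∈ NF n ∧ dR n a ∈ TS n} ∪ {a | dL n a ∈ TS n ∧ dR n a ∈ NF n}) := by
  ext a
  have hgv : gameValue (n+1) a = (gameValue n (dL n a) && gameValue n (dR n a)) := by
    rw [gameValue_succ, if_pos h1]
  have hgL : ∀ x', gameValue (n+1) (glue n x' (dR n a)) =
      (gameValue n x' && gameValue n (dR n a)) := fun x' => by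
    rw [gameValue_succ, if_pos h1, dL_glue, dR_glue]
  have hgR : ∀ y', gameValue (n+1) (glue n (dL n a) y') =
      (gameValue n (dL n a) && gameValue n y') := fun y' => by
    rw [gameValue_succ, if_pos h1, dL_glue, dR_glue]
  have hfrag := fragile_succ_iff n a
  simp only [hgL, hgR, hgv] at hfrag
  cases hx : gameValue n (dL n a) <;> cases hy : gameValue n (dR n a)
  · simp [NF, TS, FS, Set.mem_union, hgv, hfrag, hx, hy]
  · have hfL : Fragile n 1 (dL n a) ↔
        ∃ x', hammingDist (dL n a) x' ≤ 1 ∧ gameValue n x' = true := by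
      simp [Fragile, hx]
    simp [NF, TS, FS, Set.mem_union, hgv, hfrag, hx, hy, hfL]
  · have hfR : Fragile n 1 (dR n a) ↔
        ∃ y', hammingDist (dR n a) y' ≤ 1 ∧ gameValue n y' = true := by
      simp [Fragile, hy]
    simp [NF, TS, FS, Set.mem_union, hgv, hfrag, hx, hy, hfR]
  · simp [NF, TS, FS, Set.mem_union, hgv, hfrag, hx, hy]

lemma NF_succ_even (n : ℕ) (h0 : (n+1) % 2 = 0) :
    NF (n+1) = {a | dL n a ∈ NF n ∧ dR n a ∈ NF n} := by
  ext a
  have h1 : ¬ ((n+1) % 2 = 1) := by omega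
  have hgv : gameValue (n+1) a = (gameValue n (dL n a) || gameValue n (dR n a)) := by
    rw [gameValue_succ, if_neg h1]
  have hgL : ∀ x', gameValue (n+1) (glue n x' (dR n a)) =
      (gameValue n x' || gameValue n (dR n a)) := fun x' => by
    rw [gameValue_succ, if_neg h1, dL_glue, dR_glue]
  have hgR : ∀ y', gameValue (n+1) (glue n (dL n a) y') =
      (gameValue n (dL n a) || gameValue n y') := fun y' => by
    rw [gameValue_succ, if_neg h1, dL_glue, dR_glue]
  have hfrag := fragile_succ_iff n a
  simp only [hgL, hgR, hgv] at hfrag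
  cases hx : gameValue n (dL n a) <;> cases hy : gameValue n (dR n a)
  · have hfL : Fragile n 1 (dL n a) ↔
        ∃ x', hammingDist (dL n a) x' ≤ 1 ∧ gameValue n x' = true := by
      simp [Fragile, hx]
    have hfR : Fragile n 1 (dR n a) ↔
        ∃ y', hammingDist (dR n a) y' ≤ 1 ∧ gameValue n y' = true := by
      simp [Fragile, hy]
    simp only [NF, Set.mem_setOf_eq, hgv, hfrag, hx, hy, hfL, hfR]
    simp
  · simp [NF, hgv, hfrag, hx, hy]
  · simp [NF, hgv, hfrag, hx, hy]
  · simp [NF, hgv, hfrag, hx, hy]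

lemma FS_succ_odd (n : ℕ) (h1 : (n+1) % 2 = 1) :
    FS (n+1) = {a | dL n a ∈ FS n ∧ dR n a ∈ Set.univ} ∪
      {a | dL n a ∈ TS n ∧ dR n a ∈ FS n} := by
  ext a
  have hgv : gameValue (n+1) a = (gameValue n (dL n a) && gameValue n (dR n a)) := by
    rw [gameValue_succ, if_pos h1]
  cases hx : gameValue n (dL n a) <;> cases hy : gameValue n (dR n a) <;>
    simp [FS, TS, hgv, hx, hy]


lemma prob_empty (n : ℕ) (p : ℝ) : prob n p (∅ : Set (Fin (2^n) → Bool)) = 0 := by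
  simp [prob_eq]

lemma beta_eq (n : ℕ) : beta n 1 = prob n phi (NF n) / prob n phi (FS n) := rfl

lemma probFS_ne (n : ℕ) : prob n phi (FS n) ≠ 0 := by
  rw [(probTF n).2]
  have h1 := phi_pos
  split <;> positivity

lemma probNF_eq (n : ℕ) : prob n phi (NF n) = beta n 1 * prob n phi (FS n) := by
  rw [beta_eq, div_mul_cancel₀ _ (probFS_ne n)]

end BetaAux

open BetaAux in
/-- `β_0(1) = 0`; for every `n ≥ 0`, `β_{2n+1}(1) = φ³ + 2φ²·β_{2n}(1)`, and for every
`n ≥ 1`, `β_{2n}(1) = (β_{2n−1}(1))²`. -/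
theorem beta_one_fragility_recursion :
    beta 0 1 = 0 ∧
      (∀ n : ℕ, beta (2 * n + 1) 1 = phi ^ 3 + 2 * phi ^ 2 * beta (2 * n) 1) ∧
      ∀ n : ℕ, 1 ≤ n → beta (2 * n) 1 = (beta (2 * n - 1) 1) ^ 2 := by
  have hphi := phi_ne
  refine ⟨?_, ?_, ?_⟩
  · -- beta 0 1 = 0
    have hNF : NF 0 = ∅ := by
      ext a
      simp only [NF, Set.mem_setOf_eq, Set.mem_empty_iff_false, iff_false, not_and]
      intro hnf
      exfalso
      apply hnf
      refine ⟨Function.update a 0 (!(a 0)), ham_update_le a 0 _, ?_⟩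
      show Function.update a 0 (!(a 0)) 0 ≠ a 0
      rw [Function.update_self]
      exact Bool.not_ne_self (a 0)
    rw [beta_eq, hNF, prob_empty, zero_div]
  · intro n
    set m := 2 * n with hmdef
    have hm : m % 2 = 0 := by omega
    have hm1 : (m + 1) % 2 = 1 := by omega
    have d23 : Disjoint {a | dL m a ∈ NF m ∧ dR m a ∈ TS m}
        {a | dL m a ∈ TS m ∧ dR m a ∈ NF m} := by
      rw [Set.disjoint_left]
      intro a h1 h2
      simp only [NF, TS, FS, Set.mem_setOf_eq] at h1 h2
      simp_all
    have d1 : Disjoint {a | dL m a ∈ FS m ∧ dR m a ∈ FS m}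
        ({a | dL m a ∈ NF m ∧ dR m a ∈ TS m} ∪ {a | dL m a ∈ TS m ∧ dR m a ∈ NF m}) := by
      rw [Set.disjoint_left]
      intro a h1 h2
      simp only [NF, TS, FS, Set.mem_setOf_eq, Set.mem_union] at h1 h2
      rcases h2 with h2 | h2 <;> simp_all
    have hnum : prob (m+1) phi (NF (m+1)) =
        phi^2 * phi^2 + (beta m 1 * phi^2 * phi + phi * (beta m 1 * phi^2)) := by
      rw [NF_succ_odd m hm1, prob_union _ _ d1, prob_union _ _ d23,
        prob_pair, prob_pair, prob_pair, probNF_eq m, (probTF m).1, (probTF m).2]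
      simp only [if_pos hm]
    have hden : prob (m+1) phi (FS (m+1)) = phi := by
      rw [(probTF (m+1)).2, if_neg (by omega)]
    rw [beta_eq, hnum, hden]
    field_simp
    ring
  · intro n hn
    obtain ⟨k, rfl⟩ : ∃ k, n = k + 1 := ⟨n - 1, by omega⟩
    have h1 : 2 * (k + 1) - 1 = 2 * k + 1 := by omega
    have h2 : 2 * (k + 1) = (2 * k + 1) + 1 := by omega
    rw [h1, h2]
    set m := 2 * k + 1 with hmdef
    have hm : m % 2 = 1 := by omega
    have hm0 : (m + 1) % 2 = 0 := by omega
    have hnum : prob (m+1) phi (NF (m+1)) = (beta m 1 * phi) * (beta m 1 * phi) := by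
      rw [NF_succ_even m hm0, prob_pair, probNF_eq m, (probTF m).2, if_neg (by omega)]
    have hden : prob (m+1) phi (FS (m+1)) = phi^2 := by
      rw [(probTF (m+1)).2, if_pos hm0]
    rw [beta_eq, hnum, hden]
    field_simp
end

section
/- For every d ≥ 1 and every n ≥ 1, the odd-depth and even-depth squaring recurrences hold for general fragility number d: α_{2n−1}(d) = (α_{2n−2}(d))² and β_{2n}(d) = (β_{2n−1}(d))². -/
open Filter Topology

/-! A depth-`(m + 1)` game is the pair of its two depth-`m` subgames. The payoffs being
independent, `μ_{m+1,p}` is the product of two copies of `μ_{m,p}` under this identification,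
and Hamming distance is additive. At a node whose value is `v` exactly when both children have
value `v` (an `AND` node for `v = true`, an `OR` node for `v = false`), a game is robustly `v`
(of value `v` and not `d`-fragile) iff both subgames are: a perturbation of at most `d` leaves
that changes the value must change the value of one subgame, within the same budget. Hence the
numerator and the denominator of `α` (at odd depth) and `β` (at even depth) both square. -/

def subgames {α : Type*} (m : ℕ) :
    (Fin (2 ^ (m + 1)) → α) ≃ (Fin (2 ^ m) → α) × (Fin (2 ^ m) → α) :=
  ((finCongr (Nat.two_pow_succ m)).arrowCongr (Equiv.refl α)).trans (Fin.appendEquiv _ _).symm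

lemma gameValue_succ_s16 (m : ℕ) (a : Fin (2 ^ (m + 1)) → Bool) :
    gameValue (m + 1) a =
      if (m + 1) % 2 = 1 then gameValue m (subgames m a).1 && gameValue m (subgames m a).2
      else gameValue m (subgames m a).1 || gameValue m (subgames m a).2 := by
  -- `Fin.natAdd` indexes the right half by `2 ^ m + i`, `gameValue` by `i + 2 ^ m`
  have hright : (subgames m a).2 = fun i => a ⟨i.1 + 2 ^ m, by have := i.2; omega⟩ := by
    funext i
    exact congrArg a (Fin.ext (Nat.add_comm _ _))
  rw [hright]
  rfl

@[to_additive]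
lemma prod_subgames {M : Type*} [CommMonoid M] (m : ℕ) (f : Fin (2 ^ (m + 1)) → M) :
    ∏ i, f i = (∏ i, (subgames m f).1 i) * ∏ i, (subgames m f).2 i := by
  rw [← Fin.prod_congr' f (Nat.two_pow_succ m).symm, Fin.prod_univ_add]
  rfl

lemma hammingDist_subgames {α : Type*} [DecidableEq α] (m : ℕ) (a a' : Fin (2 ^ (m + 1)) → α) :
    hammingDist a a' = hammingDist (subgames m a).1 (subgames m a').1 +
      hammingDist (subgames m a).2 (subgames m a').2 := by
  simp only [hammingDist, Finset.card_filter]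
  exact sum_subgames m _

lemma prob_subgames_preimage_prod (m : ℕ) (p : ℝ) (S T : Set (Fin (2 ^ m) → Bool)) :
    prob (m + 1) p (subgames m ⁻¹' (S ×ˢ T)) = prob m p S * prob m p T := by
  classical
  have hweight (a : Fin (2 ^ (m + 1)) → Bool) :
      ∏ i, (if a i then p else 1 - p) =
        (∏ i, if (subgames m a).1 i then p else 1 - p) *
          ∏ i, if (subgames m a).2 i then p else 1 - p :=
    prod_subgames m _
  unfold prob
  rw [← (subgames m).symm.sum_comp, Fintype.sum_prod_type, Finset.sum_mul_sum]
  refine Finset.sum_congr rfl fun b _ => Finset.sum_congr rfl fun c _ => ?_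
  simp only [Set.indicator_apply, hweight, Set.mem_preimage, Equiv.apply_symm_apply,
    Set.mem_prod]
  split_ifs <;> simp_all

def Robust (n d : ℕ) (v : Bool) (a : Fin (2 ^ n) → Bool) : Prop :=
  ¬ Fragile n d a ∧ gameValue n a = v

lemma robust_succ_iff {m d : ℕ} {v : Bool}
    (hv : ∀ a, gameValue (m + 1) a = v ↔
      gameValue m (subgames m a).1 = v ∧ gameValue m (subgames m a).2 = v)
    (a : Fin (2 ^ (m + 1)) → Bool) :
    Robust (m + 1) d v a ↔ Robust m d v (subgames m a).1 ∧ Robust m d v (subgames m a).2 := by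
  obtain ⟨⟨b, c⟩, rfl⟩ := (subgames m).symm.surjective a
  have hv' (b c : Fin (2 ^ m) → Bool) :
      gameValue (m + 1) ((subgames m).symm (b, c)) = v ↔
        gameValue m b = v ∧ gameValue m c = v := by
    simpa using hv ((subgames m).symm (b, c))
  have hdist (b' c' : Fin (2 ^ m) → Bool) :
      hammingDist ((subgames m).symm (b, c)) ((subgames m).symm (b', c')) =
        hammingDist b b' + hammingDist c c' := by
    simpa using hammingDist_subgames m ((subgames m).symm (b, c)) ((subgames m).symm (b', c'))
  simp only [Robust, Equiv.apply_symm_apply]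
  constructor
  · rintro ⟨hnf, hval⟩
    obtain ⟨hb, hc⟩ := (hv' b c).1 hval
    have hflip (b' c' : Fin (2 ^ m) → Bool) (hd : hammingDist b b' + hammingDist c c' ≤ d)
        (hne : gameValue m b' ≠ v ∨ gameValue m c' ≠ v) : False :=
      hnf ⟨_, (hdist b' c').trans_le hd, by rw [hval, Ne, hv']; tauto⟩
    exact ⟨⟨fun ⟨b', hd, hne⟩ => hflip b' c (by simpa using hd) (.inl (hb ▸ hne)), hb⟩,
      fun ⟨c', hd, hne⟩ => hflip b c' (by simpa using hd) (.inr (hc ▸ hne)), hc⟩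
  · rintro ⟨⟨hnfb, hb⟩, hnfc, hc⟩
    have hval := (hv' b c).2 ⟨hb, hc⟩
    refine ⟨?_, hval⟩
    rintro ⟨a', hd, hne⟩
    obtain ⟨⟨b', c'⟩, rfl⟩ := (subgames m).symm.surjective a'
    rw [hdist] at hd
    rw [hval, Ne, hv', not_and_or] at hne
    rcases hne with hb' | hc'
    · exact hnfb ⟨b', by omega, hb ▸ hb'⟩
    · exact hnfc ⟨c', by omega, hc ▸ hc'⟩

lemma prob_robust_div_prob_value_succ {m : ℕ} (d : ℕ) (p : ℝ) {v : Bool}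
    (hv : ∀ a, gameValue (m + 1) a = v ↔
      gameValue m (subgames m a).1 = v ∧ gameValue m (subgames m a).2 = v) :
    prob (m + 1) p {a | Robust (m + 1) d v a} / prob (m + 1) p {a | gameValue (m + 1) a = v} =
      (prob m p {a | Robust m d v a} / prob m p {a | gameValue m a = v}) ^ 2 := by
  have hrobust : {a | Robust (m + 1) d v a} =
      subgames m ⁻¹' ({b | Robust m d v b} ×ˢ {b | Robust m d v b}) :=
    Set.ext (robust_succ_iff hv)
  have hvalue : {a | gameValue (m + 1) a = v} =
      subgames m ⁻¹' ({b | gameValue m b = v} ×ˢ {b | gameValue m b = v}) :=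
    Set.ext hv
  rw [hrobust, hvalue, prob_subgames_preimage_prod, prob_subgames_preimage_prod, div_pow, sq, sq]

lemma alpha_succ_of_odd {m : ℕ} (d : ℕ) (hm : (m + 1) % 2 = 1) :
    alpha (m + 1) d = alpha m d ^ 2 :=
  prob_robust_div_prob_value_succ d phi fun a => by
    rw [gameValue_succ_s16, if_pos hm, Bool.and_eq_true]

lemma beta_succ_of_even {m : ℕ} (d : ℕ) (hm : (m + 1) % 2 = 0) :
    beta (m + 1) d = beta m d ^ 2 :=
  prob_robust_div_prob_value_succ d phi fun a => by
    rw [gameValue_succ_s16, if_neg (by omega), Bool.or_eq_false_iff]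

theorem squaring_recurrences_general (d : ℕ) (n : ℕ) (hn : 1 ≤ n) :
    alpha (2 * n - 1) d = (alpha (2 * n - 2) d) ^ 2 ∧
      beta (2 * n) d = (beta (2 * n - 1) d) ^ 2 := by
  obtain ⟨k, rfl⟩ : ∃ k, n = k + 1 := ⟨n - 1, by omega⟩
  rw [show 2 * (k + 1) - 1 = 2 * k + 1 by omega, show 2 * (k + 1) - 2 = 2 * k by omega,
    show 2 * (k + 1) = 2 * k + 1 + 1 by omega]
  exact ⟨alpha_succ_of_odd d (by omega), beta_succ_of_even d (by omega)⟩

/-- For every `d ≥ 1` and `n ≥ 1`: `α_{2n−1}(d) = (α_{2n−2}(d))²` and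
`β_{2n}(d) = (β_{2n−1}(d))²`. -/
theorem squaring_recurrences (d : ℕ) (hd : 1 ≤ d) (n : ℕ) (hn : 1 ≤ n) :
    alpha (2 * n - 1) d = (alpha (2 * n - 2) d) ^ 2 ∧
      beta (2 * n) d = (beta (2 * n - 1) d) ^ 2 :=
  squaring_recurrences_general d n hn
end

section
/- As the fragility number grows, golden games become fragile with probability tending to one: lim_{d→∞} ξ_d = 0, and consequently lim_{d→∞} (1 − φ·ξ_d − φ²·ξ_d²) = 1, i.e. the asymptotic probability of d-fragility of a golden game tends to 1 as d → ∞. -/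
open Filter Topology

/-- `H(d)` computed from the values of `ξ` at arguments `< d` (given by `f`):
`H(1) = 1` and, for `d ≥ 2`,
`H(d) = 1 − Σ_{r+s=d, r,s≥1} (1−ξ_r²)(1−ξ_s²) + Σ_{r+s=d−1, r,s≥1} (1−ξ_r²)(1−ξ_s²)`. -/
noncomputable def Hof (f : ℕ → ℝ) (d : ℕ) : ℝ :=
  if d ≤ 1 then 1
  else
    1 - (∑ r ∈ Finset.Ioo 0 d, (1 - f r ^ 2) * (1 - f (d - r) ^ 2))
      + (∑ r ∈ Finset.Ioo 0 (d - 1), (1 - f r ^ 2) * (1 - f (d - 1 - r) ^ 2))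

/-- `ξ_d = (1 − √(1 − 8φ⁵·H(d)))/(4φ²)`, the smaller root of the quadratic
`φ³·H(d) − x + 2φ²·x²`, defined by strong recursion simultaneously with `H`. -/
noncomputable def xi : ℕ → ℝ
  | d =>
      (1 - Real.sqrt (1 - 8 * phi ^ 5 * Hof (fun r => if _ : r < d then xi r else 0) d)) /
        (4 * phi ^ 2)
  termination_by d => d

/-- `H(d)` of the simultaneous recursion defining `ξ`. -/
noncomputable def Hrec (d : ℕ) : ℝ := Hof xi d

/-!
Writing `Q(n) = Σ_{r+s=n, r,s≥1} ξ_r² ξ_s²`, the two sums defining `H` telescope to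
`H(d+2) = 2ξ_{d+1}² + Q(d+1) − Q(d+2)`, so `H(d)` is quadratic in the earlier values of `ξ`.
Since `|1 − √(1 − u)| ≤ |u|`, the smaller root satisfies `|ξ_d| ≤ 2φ³|H(d)| ≤ |H(d)|/2`, and strong
induction then yields the geometric bound `|ξ_d| ≤ (3/4)(2/3)^d`.
-/

lemma Hof_congr {f g : ℕ → ℝ} {d : ℕ} (h : ∀ r < d, f r = g r) : Hof f d = Hof g d := by
  unfold Hof
  split_ifs with hd
  · rfl
  · congr 1
    · congr 1
      refine Finset.sum_congr rfl fun r hr => ?_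
      rw [Finset.mem_Ioo] at hr
      rw [h r hr.2, h (d - r) (by omega)]
    · refine Finset.sum_congr rfl fun r hr => ?_
      rw [Finset.mem_Ioo] at hr
      rw [h r (by omega), h (d - 1 - r) (by omega)]

lemma xi_eq (d : ℕ) : xi d = (1 - Real.sqrt (1 - 8 * phi ^ 5 * Hrec d)) / (4 * phi ^ 2) := by
  rw [xi, Hrec, Hof_congr (g := xi) fun r hr => dif_pos hr]

lemma Hrec_of_le_one {d : ℕ} (hd : d ≤ 1) : Hrec d = 1 := by
  rw [Hrec, Hof, if_pos hd]

lemma phi_pos : 0 < phi := by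
  have : 1 < Real.sqrt 5 := by
    rw [Real.lt_sqrt zero_le_one]
    norm_num
  unfold phi
  linarith

lemma two_mul_phi_pow_three_le : 2 * phi ^ 3 ≤ 1 / 2 := by
  have hphi : phi ≤ 5 / 8 := by
    have : Real.sqrt 5 ≤ 9 / 4 := by
      rw [Real.sqrt_le_left (by norm_num)]
      norm_num
    unfold phi
    linarith
  have : phi ^ 3 ≤ (5 / 8) ^ 3 := pow_le_pow_left₀ phi_pos.le hphi 3
  linarith

lemma abs_one_sub_sqrt_le (u : ℝ) : |1 - Real.sqrt u| ≤ |1 - u| := by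
  rcases le_or_gt 0 u with hu | hu
  · have hfactor : (1 - Real.sqrt u) * (1 + Real.sqrt u) = 1 - u := by
      linear_combination -Real.sq_sqrt hu
    have hs : 0 ≤ Real.sqrt u := Real.sqrt_nonneg u
    calc |1 - Real.sqrt u| ≤ |1 - Real.sqrt u| * (1 + Real.sqrt u) :=
          le_mul_of_one_le_right (abs_nonneg _) (by linarith)
      _ = |1 - u| := by
          rw [← hfactor, abs_mul, abs_of_nonneg (by linarith : 0 ≤ 1 + Real.sqrt u)]
  · rw [Real.sqrt_eq_zero_of_nonpos hu.le, abs_of_nonneg (by linarith : (0 : ℝ) ≤ 1 - u)]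
    norm_num
    linarith

lemma abs_smaller_root_le {p : ℝ} (hp : 0 < p) (h : ℝ) :
    |(1 - Real.sqrt (1 - 8 * p ^ 5 * h)) / (4 * p ^ 2)| ≤ 2 * p ^ 3 * |h| := by
  have h4p : 0 < 4 * p ^ 2 := by positivity
  rw [abs_div, abs_of_pos h4p, div_le_iff₀ h4p]
  calc |1 - Real.sqrt (1 - 8 * p ^ 5 * h)| ≤ |1 - (1 - 8 * p ^ 5 * h)| := abs_one_sub_sqrt_le _
    _ = 2 * p ^ 3 * |h| * (4 * p ^ 2) := by
        rw [sub_sub_cancel, abs_mul, abs_of_pos (by positivity : 0 < 8 * p ^ 5)]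
        ring

lemma abs_xi_le_abs_Hrec (d : ℕ) : |xi d| ≤ |Hrec d| / 2 := by
  rw [xi_eq]
  calc _ ≤ 2 * phi ^ 3 * |Hrec d| := abs_smaller_root_le phi_pos _
    _ ≤ 1 / 2 * |Hrec d| := mul_le_mul_of_nonneg_right two_mul_phi_pow_three_le (abs_nonneg _)
    _ = |Hrec d| / 2 := by ring

lemma sum_Ioo_reflect (g : ℕ → ℝ) (n : ℕ) :
    ∑ r ∈ Finset.Ioo 0 n, g (n - r) = ∑ r ∈ Finset.Ioo 0 n, g r := by
  refine Finset.sum_nbij' (fun r => n - r) (fun r => n - r) ?_ ?_ ?_ ?_ fun _ _ => rfl <;>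
    · intro r hr
      simp only [Finset.mem_Ioo] at *
      omega

lemma sum_Ioo_one_sub_mul_one_sub (a : ℕ → ℝ) {n : ℕ} (hn : 1 ≤ n) :
    ∑ r ∈ Finset.Ioo 0 n, (1 - a r) * (1 - a (n - r)) =
      (n - 1 : ℝ) - 2 * ∑ r ∈ Finset.Ioo 0 n, a r + ∑ r ∈ Finset.Ioo 0 n, a r * a (n - r) := by
  have hexpand : ∀ r, (1 - a r) * (1 - a (n - r)) = 1 - a r - a (n - r) + a r * a (n - r) :=
    fun r => by ring
  simp only [hexpand, Finset.sum_add_distrib, Finset.sum_sub_distrib, sum_Ioo_reflect a,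
    Finset.sum_const, Nat.card_Ioo, nsmul_eq_mul, mul_one, Nat.sub_zero, Nat.cast_sub hn,
    Nat.cast_one]
  ring

noncomputable def sqConv (f : ℕ → ℝ) (n : ℕ) : ℝ :=
  ∑ r ∈ Finset.Ioo 0 n, f r ^ 2 * f (n - r) ^ 2

lemma sqConv_nonneg (f : ℕ → ℝ) (n : ℕ) : 0 ≤ sqConv f n :=
  Finset.sum_nonneg fun _ _ => by positivity

lemma Hof_add_two (f : ℕ → ℝ) (m : ℕ) :
    Hof f (m + 2) = 2 * f (m + 1) ^ 2 + sqConv f (m + 1) - sqConv f (m + 2) := by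
  have hsplit : ∑ r ∈ Finset.Ioo 0 (m + 2), f r ^ 2 =
      ∑ r ∈ Finset.Ioo 0 (m + 1), f r ^ 2 + f (m + 1) ^ 2 := by
    have hIoo : Finset.Ioo 0 (m + 2) = insert (m + 1) (Finset.Ioo 0 (m + 1)) := by
      ext r
      simp only [Finset.mem_Ioo, Finset.mem_insert]
      omega
    rw [hIoo, Finset.sum_insert (by simp), add_comm]
  rw [Hof, if_neg (by omega), show m + 2 - 1 = m + 1 from rfl,
    sum_Ioo_one_sub_mul_one_sub (f · ^ 2) (by omega : 1 ≤ m + 2),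
    sum_Ioo_one_sub_mul_one_sub (f · ^ 2) (by omega : 1 ≤ m + 1), hsplit, sqConv, sqConv]
  push_cast
  ring

lemma sqConv_le {f : ℕ → ℝ} {c q : ℝ} {n : ℕ} (hf : ∀ r < n, |f r| ≤ c * q ^ r) :
    sqConv f n ≤ (n - 1 : ℕ) * (c ^ 4 * q ^ (2 * n)) := by
  have hterm : ∀ r ∈ Finset.Ioo 0 n, f r ^ 2 * f (n - r) ^ 2 ≤ c ^ 4 * q ^ (2 * n) := by
    intro r hr
    rw [Finset.mem_Ioo] at hr
    have hr' := hf r hr.2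
    have hprod : |f r| * |f (n - r)| ≤ c * q ^ r * (c * q ^ (n - r)) :=
      mul_le_mul hr' (hf (n - r) (by omega)) (abs_nonneg _) ((abs_nonneg _).trans hr')
    have hq : c * q ^ r * (c * q ^ (n - r)) = c ^ 2 * q ^ n := by
      rw [mul_mul_mul_comm, ← pow_add, Nat.add_sub_cancel' hr.2.le, sq]
    calc f r ^ 2 * f (n - r) ^ 2 = (|f r| * |f (n - r)|) ^ 2 := by rw [mul_pow, sq_abs, sq_abs]
      _ ≤ (c ^ 2 * q ^ n) ^ 2 := by
          rw [← hq]
          exact pow_le_pow_left₀ (by positivity) hprod 2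
      _ = c ^ 4 * q ^ (2 * n) := by ring
  calc sqConv f n ≤ ∑ _r ∈ Finset.Ioo 0 n, c ^ 4 * q ^ (2 * n) := Finset.sum_le_sum hterm
    _ = (n - 1 : ℕ) * (c ^ 4 * q ^ (2 * n)) := by
        rw [Finset.sum_const, Nat.card_Ioo, nsmul_eq_mul, Nat.sub_zero]

lemma abs_Hof_add_two_le {f : ℕ → ℝ} {c q : ℝ} {m : ℕ} (hf : ∀ r < m + 2, |f r| ≤ c * q ^ r) :
    |Hof f (m + 2)| ≤
      2 * (c * q ^ (m + 1)) ^ 2 + m * (c ^ 4 * q ^ (2 * (m + 1)))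
        + (m + 1) * (c ^ 4 * q ^ (2 * (m + 2))) := by
  have hlast : f (m + 1) ^ 2 ≤ (c * q ^ (m + 1)) ^ 2 := by
    rw [← sq_abs]
    exact pow_le_pow_left₀ (abs_nonneg _) (hf (m + 1) (by omega)) 2
  have h1 := sqConv_le (n := m + 1) fun r hr => hf r (by omega)
  have h2 := sqConv_le (n := m + 2) hf
  have h1' := sqConv_nonneg f (m + 1)
  have h2' := sqConv_nonneg f (m + 2)
  rw [show m + 2 - 1 = m + 1 from rfl] at h2
  push_cast at h1 h2
  rw [Hof_add_two, abs_le]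
  constructor <;> linarith [sq_nonneg (f (m + 1))]

lemma abs_xi_le (d : ℕ) : |xi d| ≤ 3 / 4 * (2 / 3) ^ d := by
  induction d using Nat.strong_induction_on with
  | _ d ih =>
  match d with
  | 0 | 1 =>
    refine (abs_xi_le_abs_Hrec _).trans ?_
    rw [Hrec_of_le_one (by omega)]
    norm_num
  | m + 2 =>
    have hbern : (2 / 3 : ℝ) ^ m * (2 + m) ≤ 2 := by
      have := one_add_mul_le_pow (a := (1 / 2 : ℝ)) (by norm_num) m
      have hinv : (2 / 3 : ℝ) ^ m * (3 / 2) ^ m = 1 := by rw [← mul_pow]; norm_num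
      nlinarith [pow_nonneg (by norm_num : (0 : ℝ) ≤ 2 / 3) m]
    have hHrec : |Hrec (m + 2)| ≤ (2 / 3 : ℝ) ^ m * (2 / 3) ^ m * (9 / 16 + 13 * m / 64) := by
      refine (abs_Hof_add_two_le ih).trans (le_of_eq ?_)
      ring
    have hp0 : (0 : ℝ) ≤ (2 / 3) ^ m := by positivity
    calc |xi (m + 2)| ≤ |Hrec (m + 2)| / 2 := abs_xi_le_abs_Hrec _
      _ ≤ 3 / 4 * (2 / 3) ^ (m + 2) := by
          rw [pow_add]
          nlinarith [mul_le_mul_of_nonneg_left hbern hp0,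
            mul_nonneg (mul_nonneg hp0 hp0) (Nat.cast_nonneg (α := ℝ) m)]

/-- `ξ_d → 0` as `d → ∞`, and consequently the asymptotic probability
`1 − φ·ξ_d − φ²·ξ_d²` of `d`-fragility of a golden game tends to `1`. -/
theorem fragility_tendsto_one :
    Tendsto (fun d => xi d) atTop (𝓝 0) ∧
      Tendsto (fun d => 1 - phi * xi d - phi ^ 2 * (xi d) ^ 2) atTop (𝓝 1) := by
  have hgeom : Tendsto (fun d : ℕ => 3 / 4 * (2 / 3 : ℝ) ^ d) atTop (𝓝 0) := by
    simpa using (tendsto_pow_atTop_nhds_zero_of_lt_one (by norm_num) (by norm_num)).const_mul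
      (3 / 4 : ℝ)
  have hxi : Tendsto (fun d => xi d) atTop (𝓝 0) := squeeze_zero_norm abs_xi_le hgeom
  refine ⟨hxi, ?_⟩
  simpa using (tendsto_const_nhds.sub (hxi.const_mul phi)).sub ((hxi.pow 2).const_mul (phi ^ 2))
end
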